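/- arXiv:1404.4518 — 3 statements merged into one kernel-verified Lean document; each statement's English description precedes it below -/
import Mathlib

section
/- Let A_Γ be symmetric positive definite, B symmetric with c·φᵀA_Γφ ≤ φᵀBφ for all φ and A_Γ − 2B positive semidefinite (so φᵀBφ ≤ ½φᵀA_Γφ). Then the condition number of B satisfies κ(B) ≤ κ(A_Γ)/(2c). -/
/-!
In the Loewner order the hypotheses sandwich `B` between `c • AΓ` and `AΓ / 2`, while
`λ_min(AΓ) • 1 ≤ AΓ ≤ λ_max(AΓ) • 1`; hence every eigenvalue of `B` lies in
`[c λ_min(AΓ), λ_max(AΓ) / 2]`. The link between the order and the eigenvalues is that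
conjugating by the eigenvector unitary turns `A - r • 1` into the diagonal matrix of the `λᵢ - r`.
-/

open Matrix
open scoped ComplexOrder

namespace Matrix.IsHermitian

variable {n 𝕜 : Type*} [Fintype n] [DecidableEq n] [RCLike 𝕜] {A : Matrix n n 𝕜}

lemma spectral_theorem_sub_smul_one (hA : A.IsHermitian) (r : ℝ) :
    A - (r : 𝕜) • 1 = Unitary.conjStarAlgAut 𝕜 _ hA.eigenvectorUnitary
      (diagonal fun i ↦ ((hA.eigenvalues i - r : ℝ) : 𝕜)) := by
  conv_lhs => rw [hA.spectral_theorem]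
  rw [← map_one (Unitary.conjStarAlgAut 𝕜 _ hA.eigenvectorUnitary), ← map_smul, ← map_sub,
    smul_one_eq_diagonal, diagonal_sub]
  congr 2
  ext i
  simp

lemma posSemidef_sub_smul_one_iff (hA : A.IsHermitian) (r : ℝ) :
    (A - (r : 𝕜) • 1).PosSemidef ↔ ∀ i, r ≤ hA.eigenvalues i := by
  rw [hA.spectral_theorem_sub_smul_one, Unitary.conjStarAlgAut_apply,
    Unitary.isUnit_coe.posSemidef_star_right_conjugate_iff]
  simp

lemma posSemidef_smul_one_sub_iff (hA : A.IsHermitian) (r : ℝ) :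
    ((r : 𝕜) • 1 - A).PosSemidef ↔ ∀ i, hA.eigenvalues i ≤ r := by
  rw [← neg_sub, hA.spectral_theorem_sub_smul_one, ← map_neg, diagonal_neg,
    Unitary.conjStarAlgAut_apply, Unitary.isUnit_coe.posSemidef_star_right_conjugate_iff]
  simp

end Matrix.IsHermitian

lemma Matrix.posSemidef_sub_of_dotProduct_mulVec_le {n : Type*} [Fintype n]
    {A B : Matrix n n ℝ} (hA : A.IsHermitian) (hB : B.IsHermitian)
    (h : ∀ x, x ⬝ᵥ (A *ᵥ x) ≤ x ⬝ᵥ (B *ᵥ x)) : (B - A).PosSemidef :=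
  .of_dotProduct_mulVec_nonneg (hB.sub hA) fun x ↦ by
    simpa [sub_mulVec, dotProduct_sub] using h x

lemma Real.iSup_div_iInf_le {ι : Type*} [Nonempty ι] {f : ι → ℝ} {lo hi : ℝ} (hlo : 0 < lo)
    (hf : ∀ i, f i ∈ Set.Icc lo hi) : (⨆ i, f i) / (⨅ i, f i) ≤ hi / lo := by
  obtain ⟨i⟩ := ‹Nonempty ι›
  exact div_le_div₀ (hlo.le.trans ((hf i).1.trans (hf i).2)) (ciSup_le fun i ↦ (hf i).2) hlo
    (le_ciInf fun i ↦ (hf i).1)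

theorem condition_number_bound_general
    {m : Type*} [Fintype m] [DecidableEq m] [Nonempty m]
    (AΓ B : Matrix m m ℝ) (c : ℝ)
    (hAΓ : AΓ.PosDef) (hB : B.IsHermitian)
    (hc0 : 0 < c)
    (hlow : ∀ φ : m → ℝ, c * (φ ⬝ᵥ (AΓ *ᵥ φ)) ≤ φ ⬝ᵥ (B *ᵥ φ))
    (hup : (AΓ - 2 • B).PosSemidef) :
    (⨆ i, hB.eigenvalues i) / (⨅ i, hB.eigenvalues i) ≤
      (⨆ i, hAΓ.1.eigenvalues i) / (2 * c * ⨅ i, hAΓ.1.eigenvalues i) := by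
  set a := ⨅ i, hAΓ.1.eigenvalues i
  set b := ⨆ i, hAΓ.1.eigenvalues i
  have ha : 0 < a := by
    obtain ⟨i, hi⟩ := exists_eq_ciInf_of_finite (f := hAΓ.1.eigenvalues)
    simpa only [a, ← hi] using hAΓ.eigenvalues_pos i
  have hA_ge : (AΓ - a • 1).PosSemidef :=
    (hAΓ.1.posSemidef_sub_smul_one_iff a).2 fun i ↦ ciInf_le (Set.finite_range _).bddBelow i
  have hA_le : (b • 1 - AΓ).PosSemidef :=
    (hAΓ.1.posSemidef_smul_one_sub_iff b).2 fun i ↦ le_ciSup (Set.finite_range _).bddAbove i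
  have hB_ge_cA : (B - c • AΓ).PosSemidef :=
    posSemidef_sub_of_dotProduct_mulVec_le (hAΓ.1.smul (.all c)) hB fun x ↦ by
      simpa [smul_mulVec, dotProduct_smul] using hlow x
  have hB_ge : (B - (c * a) • 1).PosSemidef := by
    convert hB_ge_cA.add (hA_ge.smul hc0.le) using 1
    module
  have hB_le : ((b / 2) • 1 - B).PosSemidef := by
    have half : (0 : ℝ) ≤ 1 / 2 := by norm_num
    convert (hup.smul half).add (hA_le.smul half) using 1
    module
  calc (⨆ i, hB.eigenvalues i) / (⨅ i, hB.eigenvalues i) ≤ (b / 2) / (c * a) :=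
        Real.iSup_div_iInf_le (mul_pos hc0 ha) fun i ↦
          ⟨(hB.posSemidef_sub_smul_one_iff _).1 hB_ge i,
            (hB.posSemidef_smul_one_sub_iff _).1 hB_le i⟩
    _ = b / (2 * c * a) := by ring

/-- Let `AΓ` be symmetric positive definite and `B` symmetric with
`c·φᵀAΓφ ≤ φᵀBφ` for all `φ` (with `0 < c < 1/2`) and `AΓ − 2B` positive
semidefinite (so `φᵀBφ ≤ ½ φᵀAΓφ`).  Then the condition number of `B`
satisfies `κ(B) ≤ κ(AΓ)/(2c)`. -/
theorem condition_number_bound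
    {m : Type*} [Fintype m] [DecidableEq m] [Nonempty m]
    (AΓ B : Matrix m m ℝ) (c : ℝ)
    (hAΓ : AΓ.PosDef) (hB : B.IsHermitian)
    (hc0 : 0 < c) (hc : c < 1/2)
    (hlow : ∀ φ : m → ℝ, c * (φ ⬝ᵥ (AΓ *ᵥ φ)) ≤ φ ⬝ᵥ (B *ᵥ φ))
    (hup : (AΓ - 2 • B).PosSemidef) :
    (⨆ i, hB.eigenvalues i) / (⨅ i, hB.eigenvalues i) ≤
      (⨆ i, hAΓ.1.eigenvalues i) / (2 * c * ⨅ i, hAΓ.1.eigenvalues i) :=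
  condition_number_bound_general AΓ B c hAΓ hB hc0 hlow hup
end

section
/- Let A_Γ, B be symmetric matrices with A_Γ positive definite, and suppose the eigenvalues of the generalized eigenvalue problem Bφ = σ A_Γ φ lie in (0, 1/2). Then the stationary iteration e⁽ⁿ⁾ = (A_Γ − B₁)⁻¹B₂·(A_Γ − B₂)⁻¹B₁ e⁽ⁿ⁻²⁾, with B₁, B₂ both satisfying these spectral bounds with constants a ≤ σ ≤ b (0<a≤b<1/2), converges: the error in the norm ‖E e‖₂ with E=(I−C)A_Γ^{1/2} contracts by factor at most (b/(1−b))² per double step. -/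
/-!
Put `Cᵢ = R⁻¹ Bᵢ R⁻¹`, where `R = A_Γ^{1/2}`. Substituting `φ = R⁻¹ x`, the spectral bounds
`a A_Γ ≤ Bᵢ ≤ b A_Γ` say that the Rayleigh quotients of the symmetric matrix `Cᵢ` lie in `[a, b]`,
so `‖Cᵢ‖₂ ≤ b < 1`. Since `A_Γ - Bᵢ = R (1 - Cᵢ) R`, all factors `R` cancel and the weight
`E = (1 - C₁) R` conjugates the double step into `D₂ D₁` with `Dᵢ = Cᵢ (1 - Cᵢ)⁻¹`; the
Neumann series gives `‖Dᵢ‖₂ ≤ ‖Cᵢ‖₂ / (1 - ‖Cᵢ‖₂) ≤ b / (1 - b)`.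
-/

open Matrix
open scoped Matrix.Norms.L2Operator

section NormedRing

variable {R : Type*} [NormedRing R] [HasSummableGeomSeries R]

theorem norm_ringInverse_one_sub_le (h₁ : ‖(1 : R)‖ ≤ 1) {x : R} (hx : ‖x‖ < 1) :
    ‖Ring.inverse (1 - x)‖ ≤ (1 - ‖x‖)⁻¹ := by
  rw [← geom_series_eq_inverse x hx]
  linarith [tsum_geometric_le_of_norm_lt_one x hx]

theorem norm_mul_ringInverse_one_sub_le (h₁ : ‖(1 : R)‖ ≤ 1) {x : R} {b : ℝ} (hx : ‖x‖ ≤ b)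
    (hb : b < 1) : ‖x * Ring.inverse (1 - x)‖ ≤ b / (1 - b) := by
  have hx₁ : ‖x‖ < 1 := hx.trans_lt hb
  have hb₀ : 0 ≤ b := (norm_nonneg x).trans hx
  calc ‖x * Ring.inverse (1 - x)‖ ≤ ‖x‖ * (1 - ‖x‖)⁻¹ :=
        (norm_mul_le _ _).trans (by gcongr; exact norm_ringInverse_one_sub_le h₁ hx₁)
    _ ≤ b / (1 - b) := by
        rw [div_eq_mul_inv]
        gcongr

end NormedRing

theorem EuclideanSpace.norm_toLp_eq_sqrt_dotProduct {n : Type*} [Fintype n] (v : n → ℝ) :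
    ‖WithLp.toLp 2 v‖ = √(v ⬝ᵥ v) := by
  rw [EuclideanSpace.norm_eq]
  simp [dotProduct, sq]

namespace Matrix

variable {n : Type*} [Fintype n] [DecidableEq n]

omit [DecidableEq n] in
theorem dotProduct_mulVec_mul_mul_of_isHermitian {S : Matrix n n ℝ} (hS : S.IsHermitian)
    (M : Matrix n n ℝ) (x : n → ℝ) :
    x ⬝ᵥ (S * M * S) *ᵥ x = (S *ᵥ x) ⬝ᵥ M *ᵥ (S *ᵥ x) := by
  have hST : Sᵀ = S := (conjTranspose_eq_transpose_of_trivial S).symm.trans hS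
  rw [← mulVec_mulVec, ← mulVec_mulVec, dotProduct_mulVec x S, ← mulVec_transpose, hST]

theorem l2_opNorm_le_of_abs_dotProduct_mulVec_le {C : Matrix n n ℝ} (hC : C.IsHermitian)
    {κ : ℝ} (hκ : 0 ≤ κ) (h : ∀ x, |x ⬝ᵥ C *ᵥ x| ≤ κ * (x ⬝ᵥ x)) : ‖C‖ ≤ κ := by
  rw [cstar_norm_def, ContinuousLinearMap.norm_eq_iSup_rayleighQuotient _
    (by simpa [coe_toEuclideanCLM_eq_toEuclideanLin] using hC)]
  refine ciSup_le fun x => ?_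
  have hq : (toEuclideanCLM (n := n) (𝕜 := ℝ) C).reApplyInnerSelf x =
      x.ofLp ⬝ᵥ C *ᵥ x.ofLp := by
    rw [ContinuousLinearMap.reApplyInnerSelf_apply, real_inner_comm, inner_toEuclideanCLM]
    rfl
  have hn : ‖x‖ ^ 2 = x.ofLp ⬝ᵥ x.ofLp := by
    rw [← real_inner_self_eq_norm_sq, EuclideanSpace.inner_eq_star_dotProduct]
    rfl
  rw [ContinuousLinearMap.rayleighQuotient, hq, abs_div, abs_of_nonneg (sq_nonneg ‖x‖), hn]
  exact div_le_of_le_mul₀ (hn ▸ sq_nonneg ‖x‖) hκ (h _)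

theorem l2_opNorm_inv_mul_mul_inv_le {A R B : Matrix n n ℝ} (hR : R.IsHermitian)
    (hRu : IsUnit R) (hRA : R * R = A) (hB : B.IsHermitian) {κ : ℝ} (hκ : 0 ≤ κ)
    (h : ∀ φ, |φ ⬝ᵥ B *ᵥ φ| ≤ κ * (φ ⬝ᵥ A *ᵥ φ)) : ‖R⁻¹ * B * R⁻¹‖ ≤ κ := by
  have hRinv : R⁻¹.IsHermitian := hR.inv
  refine l2_opNorm_le_of_abs_dotProduct_mulVec_le ?_ hκ fun x => ?_
  · simpa only [hRinv.eq] using isHermitian_conjTranspose_mul_mul R⁻¹ hB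
  · have hx : R *ᵥ (R⁻¹ *ᵥ x) = x := by
      rw [mulVec_mulVec, mul_nonsing_inv _ ((isUnit_iff_isUnit_det R).mp hRu), one_mulVec]
    have hq : x ⬝ᵥ x = (R⁻¹ *ᵥ x) ⬝ᵥ A *ᵥ (R⁻¹ *ᵥ x) := by
      simpa only [mul_one, one_mulVec, hx, hRA] using
        (dotProduct_mulVec_mul_mul_of_isHermitian hR 1 (R⁻¹ *ᵥ x)).symm
    rw [dotProduct_mulVec_mul_mul_of_isHermitian hRinv, hq]
    exact h _

theorem l2_opNorm_one_le {𝕜 : Type*} [RCLike 𝕜] : ‖(1 : Matrix n n 𝕜)‖ ≤ 1 := by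
  rw [cstar_norm_def, map_one]
  exact ContinuousLinearMap.norm_id_le

theorem l2_opNorm_mul_inv_one_sub_le {𝕜 : Type*} [RCLike 𝕜] {C : Matrix n n 𝕜} {b : ℝ}
    (hC : ‖C‖ ≤ b) (hb : b < 1) : ‖C * (1 - C)⁻¹‖ ≤ b / (1 - b) := by
  rw [nonsing_inv_eq_ringInverse]
  exact norm_mul_ringInverse_one_sub_le l2_opNorm_one_le hC hb

theorem l2_opNorm_mul_inv_one_sub_mul_le {𝕜 : Type*} [RCLike 𝕜] {C₁ C₂ : Matrix n n 𝕜} {b : ℝ}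
    (hC₁ : ‖C₁‖ ≤ b) (hC₂ : ‖C₂‖ ≤ b) (hb : b < 1) :
    ‖C₂ * (1 - C₂)⁻¹ * (C₁ * (1 - C₁)⁻¹)‖ ≤ (b / (1 - b)) ^ 2 := by
  have hκ : 0 ≤ b / (1 - b) := div_nonneg ((norm_nonneg _).trans hC₁) (by linarith)
  rw [sq]
  exact (l2_opNorm_mul _ _).trans <| mul_le_mul (l2_opNorm_mul_inv_one_sub_le hC₂ hb)
    (l2_opNorm_mul_inv_one_sub_le hC₁ hb) (norm_nonneg _) hκ

theorem sqrt_dotProduct_mulVec_self_le {M : Matrix n n ℝ} {c : ℝ} (hM : ‖M‖ ≤ c)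
    (v : n → ℝ) : √((M *ᵥ v) ⬝ᵥ (M *ᵥ v)) ≤ c * √(v ⬝ᵥ v) := by
  rw [← EuclideanSpace.norm_toLp_eq_sqrt_dotProduct, ← EuclideanSpace.norm_toLp_eq_sqrt_dotProduct]
  exact (l2_opNorm_mulVec M (WithLp.toLp 2 v)).trans (by gcongr)

theorem schwarz_double_step_conj_eq {α : Type*} [CommRing α] {R C₁ C₂ : Matrix n n α}
    (hR : IsUnit R) (h₁ : IsUnit (1 - C₁)) :
    (1 - C₁) * R * ((R * R - R * C₁ * R)⁻¹ * (R * C₂ * R) *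
        ((R * R - R * C₂ * R)⁻¹ * (R * C₁ * R))) =
      C₂ * (1 - C₂)⁻¹ * (C₁ * (1 - C₁)⁻¹) * ((1 - C₁) * R) := by
  have hconj (C : Matrix n n α) : (R * R - R * C * R)⁻¹ = R⁻¹ * (1 - C)⁻¹ * R⁻¹ := by
    rw [show R * R - R * C * R = R * (1 - C) * R by noncomm_ring, mul_inv_rev, mul_inv_rev,
      mul_assoc]
  rw [isUnit_iff_isUnit_det] at hR h₁
  rw [hconj, hconj]
  simp only [mul_assoc, mul_nonsing_inv_cancel_left _ _ hR, nonsing_inv_mul_cancel_left _ _ hR,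
    mul_nonsing_inv_cancel_left _ _ h₁, nonsing_inv_mul_cancel_left _ _ h₁]

end Matrix

/-- Convergence of the classical Schwarz iteration: let `AΓ` be symmetric
positive definite with positive definite square root `R` (`R * R = AΓ`), and
let `B₁, B₂` be symmetric with `a·φᵀAΓφ ≤ φᵀBᵢφ ≤ b·φᵀAΓφ` for all `φ`,
`0 < a ≤ b < 1/2`.  Then, with `C₁ := R⁻¹ B₁ R⁻¹` and `E := (I − C₁) R`, one
double step of the iteration
`e ↦ (AΓ − B₁)⁻¹ B₂ (AΓ − B₂)⁻¹ B₁ e` contracts the norm `‖E e‖₂` by the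
factor `(b/(1−b))²`. -/
theorem classical_schwarz_contraction
    {m : Type*} [Fintype m] [DecidableEq m]
    (AΓ R B₁ B₂ : Matrix m m ℝ) (a b : ℝ)
    (hAΓ : AΓ.PosDef) (hR : R.PosDef) (hRsq : R * R = AΓ)
    (hB₁ : B₁ᵀ = B₁) (hB₂ : B₂ᵀ = B₂)
    (ha : 0 < a) (hab : a ≤ b) (hb : b < 1/2)
    (h1low : ∀ φ : m → ℝ, a * (φ ⬝ᵥ (AΓ *ᵥ φ)) ≤ φ ⬝ᵥ (B₁ *ᵥ φ))
    (h1up : ∀ φ : m → ℝ, φ ⬝ᵥ (B₁ *ᵥ φ) ≤ b * (φ ⬝ᵥ (AΓ *ᵥ φ)))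
    (h2low : ∀ φ : m → ℝ, a * (φ ⬝ᵥ (AΓ *ᵥ φ)) ≤ φ ⬝ᵥ (B₂ *ᵥ φ))
    (h2up : ∀ φ : m → ℝ, φ ⬝ᵥ (B₂ *ᵥ φ) ≤ b * (φ ⬝ᵥ (AΓ *ᵥ φ)))
    (e e' : m → ℝ)
    (he' : e' = ((AΓ - B₁)⁻¹ * B₂ * ((AΓ - B₂)⁻¹ * B₁)) *ᵥ e) :
    Real.sqrt ((((1 - R⁻¹ * B₁ * R⁻¹) * R) *ᵥ e') ⬝ᵥ
        (((1 - R⁻¹ * B₁ * R⁻¹) * R) *ᵥ e')) ≤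
      (b / (1 - b)) ^ 2 *
        Real.sqrt ((((1 - R⁻¹ * B₁ * R⁻¹) * R) *ᵥ e) ⬝ᵥ
          (((1 - R⁻¹ * B₁ * R⁻¹) * R) *ᵥ e)) := by
  have hb₀ : 0 ≤ b := ha.le.trans hab
  have hb₁ : b < 1 := by linarith
  have hRdet : IsUnit R.det := (isUnit_iff_isUnit_det R).mp hR.isUnit
  have hAΓ_nonneg (φ : m → ℝ) : 0 ≤ φ ⬝ᵥ AΓ *ᵥ φ := hAΓ.posSemidef.dotProduct_mulVec_nonneg φ
  have hnorm {B : Matrix m m ℝ} (hB : Bᵀ = B) (hlow : ∀ φ, a * (φ ⬝ᵥ AΓ *ᵥ φ) ≤ φ ⬝ᵥ B *ᵥ φ)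
      (hup : ∀ φ, φ ⬝ᵥ B *ᵥ φ ≤ b * (φ ⬝ᵥ AΓ *ᵥ φ)) : ‖R⁻¹ * B * R⁻¹‖ ≤ b :=
    l2_opNorm_inv_mul_mul_inv_le hR.isHermitian hR.isUnit hRsq
      ((conjTranspose_eq_transpose_of_trivial B).trans hB) hb₀ fun φ => abs_le.mpr
        ⟨by nlinarith [hlow φ, hAΓ_nonneg φ], hup φ⟩
  have hconj (B : Matrix m m ℝ) : B = R * (R⁻¹ * B * R⁻¹) * R := by
    simp only [mul_assoc, mul_nonsing_inv_cancel_left _ _ hRdet, nonsing_inv_mul _ hRdet, mul_one]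
  set C₁ := R⁻¹ * B₁ * R⁻¹
  set C₂ := R⁻¹ * B₂ * R⁻¹
  have hC₁ : ‖C₁‖ ≤ b := hnorm hB₁ h1low h1up
  have hC₂ : ‖C₂‖ ≤ b := hnorm hB₂ h2low h2up
  have hstep : (1 - C₁) * R * ((AΓ - B₁)⁻¹ * B₂ * ((AΓ - B₂)⁻¹ * B₁)) =
      C₂ * (1 - C₂)⁻¹ * (C₁ * (1 - C₁)⁻¹) * ((1 - C₁) * R) := by
    rw [← hRsq, hconj B₁, hconj B₂]
    exact schwarz_double_step_conj_eq hR.isUnit (isUnit_one_sub_of_norm_lt_one (hC₁.trans_lt hb₁))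
  rw [he', mulVec_mulVec, hstep, ← mulVec_mulVec]
  exact sqrt_dotProduct_mulVec_self_le (l2_opNorm_mul_inv_one_sub_mul_le hC₁ hC₂ hb₁) _
end

section
/- Let C be symmetric with eigenvalues in [1/2−c, 1/2−εh] where 0<εh≤c<1/2 and set p̂ = (1−√(h))/(1+√(h)) for small h>0 (so 1+p̂ = 2/(1+√h)). Then for h sufficiently small every eigenvalue of D̂ = I − (1−p̂)(I−(1+p̂)C)^{-1} lies in (−1, 1−c₂√h] for some constant c₂>0 depending only on c and ε, hence ρ(D̂) ≤ 1 − O(√h). -/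
open Matrix

/-!
`D̂` is a rational function of `C`, so an eigenvector `φ` of `D̂` with eigenvalue `σ̂` is an
eigenvector of `C`, with eigenvalue `σ = (1 + √h)/2 - √h/(1 - σ̂)`. The bound `σ ≤ 1/2 - εh`
forces `0 < 1 - σ̂ < 2`, and the bound `σ ≥ 1/2 - c` forces `1 - σ̂ ≥ 2√h/(√h + 2c)`, which
exceeds `2√h/(1 + 2c)` once `h < 1`.
-/

namespace Matrix

variable {K n : Type*} [Field K] [Fintype n] [DecidableEq n] {A : Matrix n n K} {φ : n → K}

theorem mulVec_eq_smul_of_one_sub_smul_mulVec_eq_smul {a μ : K} (ha : a ≠ 0)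
    (h : (1 - a • A) *ᵥ φ = μ • φ) : A *ᵥ φ = ((1 - μ) / a) • φ := by
  rw [sub_mulVec, one_mulVec, smul_mulVec] at h
  rw [div_eq_inv_mul, ← smul_smul, sub_smul, one_smul, ← h, sub_sub_cancel, smul_smul,
    inv_mul_cancel₀ ha, one_smul]

theorem isUnit_det_one_sub_smul {b : K} (hb : b ≠ 0)
    (h : ∀ v, v ≠ 0 → A *ᵥ v ≠ b⁻¹ • v) : IsUnit (1 - b • A).det := by
  refine isUnit_iff_ne_zero.2 fun hdet => ?_
  obtain ⟨v, hv, hMv⟩ := exists_mulVec_eq_zero_iff.2 hdet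
  refine h v hv ?_
  simpa using mulVec_eq_smul_of_one_sub_smul_mulVec_eq_smul (μ := 0) hb (by simpa using hMv)

theorem mulVec_eq_inv_smul_of_inv_mulVec_eq_smul (hA : IsUnit A.det) (hφ : φ ≠ 0) {t : K}
    (h : A⁻¹ *ᵥ φ = t • φ) : A *ᵥ φ = t⁻¹ • φ := by
  have hφt : t • (A *ᵥ φ) = φ := by
    rw [← mulVec_smul, ← h, mulVec_mulVec, mul_nonsing_inv A hA, one_mulVec]
  have ht : t ≠ 0 := by
    rintro rfl
    exact hφ (by simpa using hφt.symm)
  rw [← smul_right_inj ht, hφt, smul_smul, mul_inv_cancel₀ ht, one_smul]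

theorem mulVec_eq_smul_of_one_sub_smul_inv_mulVec_eq_smul {a b μ : K} (ha : a ≠ 0)
    (hb : b ≠ 0) (hA : IsUnit (1 - b • A).det) (hφ : φ ≠ 0)
    (h : (1 - a • (1 - b • A)⁻¹) *ᵥ φ = μ • φ) :
    A *ᵥ φ = ((1 - a / (1 - μ)) / b) • φ := by
  have hinv := mulVec_eq_smul_of_one_sub_smul_mulVec_eq_smul ha h
  have hM := mulVec_eq_inv_smul_of_inv_mulVec_eq_smul hA hφ hinv
  rw [inv_div] at hM
  exact mulVec_eq_smul_of_one_sub_smul_mulVec_eq_smul hb hM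

end Matrix

section OptimizedParameter

variable {s : ℝ}

theorem one_add_one_sub_div_one_add (hs : 1 + s ≠ 0) : 1 + (1 - s) / (1 + s) = 2 / (1 + s) := by
  field_simp
  ring

theorem one_sub_one_sub_div_one_add (hs : 1 + s ≠ 0) :
    1 - (1 - s) / (1 + s) = 2 * s / (1 + s) := by
  field_simp
  ring

theorem one_sub_div_div_one_add_one_sub_div_one_add (hs : 1 + s ≠ 0) (τ : ℝ) :
    (1 - (1 - (1 - s) / (1 + s)) / τ) / (1 + (1 - s) / (1 + s)) = (1 + s) / 2 - s / τ := by
  rw [one_add_one_sub_div_one_add hs, one_sub_one_sub_div_one_add hs]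
  field_simp

theorem bounds_of_le_one_add_div_two_sub_div_le {c δ τ : ℝ} (hs0 : 0 < s) (hs1 : s < 1)
    (hδ : 0 < δ) (hlo : 1 / 2 - c ≤ (1 + s) / 2 - s / τ) (hhi : (1 + s) / 2 - s / τ ≤ 1 / 2 - δ) :
    τ < 2 ∧ 2 / (1 + 2 * c) * s ≤ τ := by
  have hτ : 0 < τ := by
    by_contra! hτ
    have : s / τ ≤ 0 := div_nonpos_of_nonneg_of_nonpos hs0.le hτ
    linarith
  have hsτ : s / τ * τ = s := div_mul_cancel₀ s hτ.ne'
  constructor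
  · nlinarith
  · rw [div_mul_eq_mul_div, div_le_iff₀ (by linarith)]
    nlinarith

end OptimizedParameter

theorem optimized_schwarz_spectral_radius_general
    {m : Type*} [Fintype m] [DecidableEq m]
    (c ε : ℝ) (hε : 0 < ε) (hc0 : 0 < c) :
    ∃ c₂ > (0 : ℝ), ∃ h₀ > (0 : ℝ), ∀ h : ℝ, 0 < h → h < h₀ →
      ∀ C : Matrix m m ℝ, Cᵀ = C →
        (∀ (σ : ℝ) (φ : m → ℝ), φ ≠ 0 → C *ᵥ φ = σ • φ →
          1/2 - c ≤ σ ∧ σ ≤ 1/2 - ε * h) →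
        ∀ (σhat : ℝ) (φ : m → ℝ), φ ≠ 0 →
          (1 - (1 - (1 - Real.sqrt h) / (1 + Real.sqrt h)) •
              (1 - (1 + (1 - Real.sqrt h) / (1 + Real.sqrt h)) • C)⁻¹) *ᵥ φ =
            σhat • φ →
          -1 < σhat ∧ σhat ≤ 1 - c₂ * Real.sqrt h := by
  refine ⟨2 / (1 + 2 * c), by positivity, 1, one_pos, ?_⟩
  intro h hh0 hh1 C _ hspec σhat φ hφ hD
  set s := Real.sqrt h
  have hs0 : 0 < s := Real.sqrt_pos.2 hh0
  have hs1 : s < 1 := (Real.sqrt_lt' one_pos).2 (by rwa [one_pow])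
  have hs : 1 + s ≠ 0 := by positivity
  have hb : 1 + (1 - s) / (1 + s) ≠ 0 := by rw [one_add_one_sub_div_one_add hs]; positivity
  have ha : 1 - (1 - s) / (1 + s) ≠ 0 := by rw [one_sub_one_sub_div_one_add hs]; positivity
  have hM : IsUnit (1 - (1 + (1 - s) / (1 + s)) • C).det := by
    refine isUnit_det_one_sub_smul hb fun v hv hCv => ?_
    have := (hspec _ v hv hCv).2
    rw [one_add_one_sub_div_one_add hs, inv_div] at this
    linarith [mul_pos hε hh0]
  have hCφ := mulVec_eq_smul_of_one_sub_smul_inv_mulVec_eq_smul ha hb hM hφ hD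
  obtain ⟨hlo, hhi⟩ := hspec _ φ hφ hCφ
  rw [one_sub_div_div_one_add_one_sub_div_one_add hs] at hlo hhi
  obtain ⟨hlt, hge⟩ := bounds_of_le_one_add_div_two_sub_div_le hs0 hs1 (mul_pos hε hh0) hlo hhi
  constructor <;> linarith

/-- Let `C` be symmetric with eigenvalues in `[1/2 − c, 1/2 − εh]` where
`0 < ε`, `0 < c < 1/2`, and set `p̂ = (1 − √h)/(1 + √h)`.  Then there are
constants `c₂ > 0` and `h₀ > 0`, depending only on `c` and `ε`, such that for
all `0 < h < h₀` every eigenvalue of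
`D̂ = I − (1 − p̂)(I − (1 + p̂)C)⁻¹` lies in `(−1, 1 − c₂√h]`; hence
`ρ(D̂) ≤ 1 − O(√h)`. -/
theorem optimized_schwarz_spectral_radius
    {m : Type*} [Fintype m] [DecidableEq m]
    (c ε : ℝ) (hε : 0 < ε) (hc0 : 0 < c) (hc : c < 1/2) :
    ∃ c₂ > (0 : ℝ), ∃ h₀ > (0 : ℝ), ∀ h : ℝ, 0 < h → h < h₀ →
      ∀ C : Matrix m m ℝ, Cᵀ = C →
        (∀ (σ : ℝ) (φ : m → ℝ), φ ≠ 0 → C *ᵥ φ = σ • φ →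
          1/2 - c ≤ σ ∧ σ ≤ 1/2 - ε * h) →
        ∀ (σhat : ℝ) (φ : m → ℝ), φ ≠ 0 →
          (1 - (1 - (1 - Real.sqrt h) / (1 + Real.sqrt h)) •
              (1 - (1 + (1 - Real.sqrt h) / (1 + Real.sqrt h)) • C)⁻¹) *ᵥ φ =
            σhat • φ →
          -1 < σhat ∧ σhat ≤ 1 - c₂ * Real.sqrt h :=
  optimized_schwarz_spectral_radius_general c ε hε hc0
end
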